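/- arXiv:1208.1954 — 4 statements merged into one kernel-verified Lean document; each statement's English description precedes it below -/
import Mathlib

section
/- Every singleton {x₀} in a Lipschitz differentiability space (X,d,μ) satisfies μ({x₀}) = 0. -/
open MeasureTheory Metric Filter Set Topology
open scoped ENNReal NNReal

noncomputable section

/-- The euclidean dot product on `ℝⁿ`. -/
def euclDot {n : ℕ} (a b : EuclideanSpace ℝ (Fin n)) : ℝ := ∑ i, a i * b i

/-- `f` admits `D` as a derivative at `x₀` with respect to the chart map `φ`:
`|f x - f x₀ - D·(φ x - φ x₀)| / d(x,x₀) → 0` as `x → x₀`. -/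
def DiffAt {X : Type*} [MetricSpace X] {n : ℕ} (f : X → ℝ)
    (φ : X → EuclideanSpace ℝ (Fin n)) (x₀ : X) (D : EuclideanSpace ℝ (Fin n)) : Prop :=
  Tendsto (fun x => |f x - f x₀ - euclDot D (φ x - φ x₀)| / dist x x₀) (𝓝[≠] x₀) (𝓝 0)

/-- A metric measure space is a Lipschitz differentiability space if it admits a countable
Borel decomposition into charts with respect to which every real-valued Lipschitz function is
differentiable almost everywhere. -/
def IsLDS (X : Type*) [MetricSpace X] [MeasurableSpace X] (μ : Measure X) : Prop :=
  ∃ (n : ℕ → ℕ) (U : ℕ → Set X) (φ : ∀ i, X → EuclideanSpace ℝ (Fin (n i))),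
    (∀ i, MeasurableSet (U i)) ∧ (⋃ i, U i) = univ ∧
    (∀ i, ∃ K : ℝ≥0, LipschitzWith K (φ i)) ∧
    ∀ f : X → ℝ, (∃ K : ℝ≥0, LipschitzWith K f) →
      ∀ i, ∀ᵐ x ∂(μ.restrict (U i)), ∃! D, DiffAt f (φ i) x D

end

/-- Auxiliary: a rapidly converging sequence of points distinct from `x₀`. -/
lemma exists_fast_seq {X : Type*} [MetricSpace X] (x₀ : X)
    (key : ∀ r : ℝ, 0 < r → ∃ y : X, y ≠ x₀ ∧ dist y x₀ < r) :
    ∃ x : ℕ → X, (∀ k, x k ≠ x₀) ∧ (∀ k, dist (x (k+1)) x₀ < dist (x k) x₀ / 4) ∧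
      dist (x 0) x₀ < 1 := by
  choose F hne hlt using key
  let g : ℕ → {y : X // y ≠ x₀} := fun k =>
    Nat.rec ⟨F 1 one_pos, hne 1 one_pos⟩
      (fun _ p => ⟨F (dist p.1 x₀ / 4) (div_pos (dist_pos.mpr p.2) four_pos), hne _ _⟩) k
  exact ⟨fun k => (g k).1, fun k => (g k).2, fun k => hlt _ _, hlt _ _⟩

/-- Auxiliary: `euclDot` scales in the second argument. -/
lemma euclDot_smul {n : ℕ} (D u : EuclideanSpace ℝ (Fin n)) (c : ℝ) :
    euclDot D (c • u) = c * euclDot D u := by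
  unfold euclDot
  rw [Finset.mul_sum]
  refine Finset.sum_congr rfl (fun i _ => ?_)
  simp [PiLp.smul_apply, smul_eq_mul]; ring

/-- Auxiliary: `euclDot D` is continuous. -/
lemma euclDot_continuous {n : ℕ} (D : EuclideanSpace ℝ (Fin n)) :
    Continuous (fun u : EuclideanSpace ℝ (Fin n) => euclDot D u) := by
  unfold euclDot
  exact continuous_finset_sum _ (fun i _ =>
    continuous_const.mul (EuclideanSpace.proj i).continuous)

/-- **Singletons in a Lipschitz differentiability space have measure zero.** -/
theorem singleton_null_of_lds
    {X : Type*} [MetricSpace X] [CompleteSpace X] [TopologicalSpace.SeparableSpace X]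
    [MeasurableSpace X] [BorelSpace X] (μ : Measure X) [IsFiniteMeasure μ]
    (hiso : μ {x : X | 𝓝[≠] x = ⊥} = 0)
    (hX : IsLDS X μ) (x₀ : X) : μ {x₀} = 0 := by
  by_contra hpos
  -- x₀ is not isolated
  have hnb : (𝓝[≠] x₀).NeBot := by
    rw [neBot_iff]
    intro h
    exact hpos (measure_mono_null (singleton_subset_iff.mpr h) hiso)
  have key : ∀ r : ℝ, 0 < r → ∃ y : X, y ≠ x₀ ∧ dist y x₀ < r := by
    intro r hr
    have hmem : Metric.ball x₀ r ∩ {x₀}ᶜ ∈ 𝓝[≠] x₀ :=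
      inter_mem (nhdsWithin_le_nhds (ball_mem_nhds _ hr)) self_mem_nhdsWithin
    obtain ⟨y, hy1, hy2⟩ := Filter.nonempty_of_mem hmem
    exact ⟨y, hy2, mem_ball.mp hy1⟩
  obtain ⟨x, hxne, hx4, hx0⟩ := exists_fast_seq x₀ key
  set r : ℕ → ℝ := fun k => dist (x k) x₀ with hrdef
  have hrpos : ∀ k, 0 < r k := fun k => dist_pos.mpr (hxne k)
  have hanti : StrictAnti r := strictAnti_nat_of_succ_lt (fun k =>
    lt_of_lt_of_le (hx4 k) (by linarith [(hrpos k).le]))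
  have hgap : ∀ a b : ℕ, a < b → r b ≤ r a / 4 := by
    intro a b hab
    calc r b ≤ r (a+1) := hanti.antitone (Nat.succ_le_of_lt hab)
    _ ≤ r a / 4 := (hx4 a).le
  have hbound : ∀ k, r k < (1/4 : ℝ)^k := by
    intro k
    induction k with
    | zero => simpa using hx0
    | succ k ih =>
      calc r (k+1) < r k / 4 := hx4 k
      _ < (1/4)^k / 4 := by linarith
      _ = (1/4)^(k+1) := by ring
  have hrtend : Tendsto r atTop (𝓝 0) := by
    apply squeeze_zero (fun k => (hrpos k).le) (fun k => (hbound k).le)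
    exact tendsto_pow_atTop_nhds_zero_of_lt_one (by norm_num) (by norm_num)
  -- chart containing x₀
  obtain ⟨n, U, φ, hUmeas, hUuniv, hφlip, hdiff⟩ := hX
  obtain ⟨i, hxU⟩ : ∃ i, x₀ ∈ U i := by
    have : x₀ ∈ ⋃ j, U j := hUuniv ▸ mem_univ x₀
    exact mem_iUnion.mp this
  obtain ⟨K, hK⟩ := hφlip i
  -- bounded sequence of difference quotients of the chart map
  set v : ℕ → EuclideanSpace ℝ (Fin (n i)) := fun k => (r k)⁻¹ • (φ i (x k) - φ i x₀)
    with hvdef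
  have hvmem : ∀ k, v k ∈ Metric.closedBall (0 : EuclideanSpace ℝ (Fin (n i))) K := by
    intro k
    rw [Metric.mem_closedBall, dist_zero_right, hvdef]
    simp only [norm_smul, norm_inv, Real.norm_eq_abs, abs_of_pos (hrpos k)]
    rw [inv_mul_le_iff₀ (hrpos k)]
    calc ‖φ i (x k) - φ i x₀‖ = dist (φ i (x k)) (φ i x₀) := (dist_eq_norm _ _).symm
    _ ≤ K * dist (x k) x₀ := hK.dist_le_mul _ _
    _ = r k * K := mul_comm _ _
  obtain ⟨ℓ, -, ψ, hψ, hψtend⟩ :=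
    tendsto_subseq_of_bounded (Metric.isBounded_closedBall
      (x := (0 : EuclideanSpace ℝ (Fin (n i)))) (r := (K : ℝ))) hvmem
  -- the relabelled sequence
  set y : ℕ → X := fun k => x (ψ k) with hydef
  set ρ : ℕ → ℝ := fun k => r (ψ k) with hρdef
  have hρpos : ∀ k, 0 < ρ k := fun k => hrpos (ψ k)
  have hρgap : ∀ a b : ℕ, a < b → ρ b ≤ ρ a / 4 := fun a b hab => hgap _ _ (hψ hab)
  have hytend : Tendsto y atTop (𝓝[≠] x₀) := by
    apply tendsto_nhdsWithin_of_tendsto_nhds_of_eventually_within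
    · apply tendsto_iff_dist_tendsto_zero.mpr
      exact hrtend.comp hψ.tendsto_atTop
    · exact Eventually.of_forall (fun k => hxne (ψ k))
  -- the bad Lipschitz function
  set A : Set X := insert x₀ (Set.range (fun j => y (2*j))) with hAdef
  set w : X → ℝ := fun z => Metric.infDist z A with hwdef
  have hw0 : w x₀ = 0 := Metric.infDist_zero_of_mem (mem_insert _ _)
  have hweven : ∀ k, w (y (2*k)) = 0 := fun k =>
    Metric.infDist_zero_of_mem (mem_insert_iff.mpr (Or.inr ⟨k, rfl⟩))
  have hdistlb : ∀ a b : ℕ, |ρ a - ρ b| ≤ dist (y a) (y b) := by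
    intro a b
    have := abs_dist_sub_le (y a) (y b) x₀
    exact this
  have hwodd : ∀ k, (3/4 : ℝ) * ρ (2*k+1) ≤ w (y (2*k+1)) := by
    intro k
    by_contra hcon
    push_neg at hcon
    rw [hwdef] at hcon
    obtain ⟨z, hzA, hzd⟩ := (Metric.infDist_lt_iff ⟨x₀, mem_insert _ _⟩).mp hcon
    rcases mem_insert_iff.mp hzA with hz | ⟨j, hj⟩
    · rw [hz] at hzd
      have : dist (y (2*k+1)) x₀ = ρ (2*k+1) := rfl
      rw [this] at hzd
      linarith [hρpos (2*k+1)]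
    · rw [← hj] at hzd
      rcases lt_trichotomy (2*j) (2*k+1) with h | h | h
      · have h4 : ρ (2*k+1) ≤ ρ (2*j) / 4 := hρgap _ _ h
        have hd := hdistlb (2*j) (2*k+1)
        have : ρ (2*j) - ρ (2*k+1) ≤ dist (y (2*k+1)) (y (2*j)) := by
          rw [dist_comm]
          exact le_trans (le_abs_self _) hd
        linarith [hρpos (2*k+1)]
      · omega
      · have h4 : ρ (2*j) ≤ ρ (2*k+1) / 4 := hρgap _ _ h
        have hd := hdistlb (2*k+1) (2*j)
        have : ρ (2*k+1) - ρ (2*j) ≤ dist (y (2*k+1)) (y (2*j)) :=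
          le_trans (le_abs_self _) hd
        linarith [hρpos (2*j)]
  -- w is Lipschitz, so it is differentiable at x₀ (an atom of μ.restrict (U i))
  have hwlip : ∃ L : ℝ≥0, LipschitzWith L w := ⟨1, Metric.lipschitz_infDist_pt A⟩
  have hae := hdiff w hwlip i
  have hx₀diff : ∃! D, DiffAt w (φ i) x₀ D := by
    by_contra hcon
    have hsub : {x₀} ⊆ {z : X | ¬ ∃! D, DiffAt w (φ i) z D} :=
      singleton_subset_iff.mpr hcon
    have h0 : μ.restrict (U i) {z : X | ¬ ∃! D, DiffAt w (φ i) z D} = 0 := by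
      rw [← compl_setOf]
      exact hae
    have h1 : μ.restrict (U i) {x₀} = 0 := measure_mono_null hsub h0
    rw [Measure.restrict_apply (measurableSet_singleton x₀)] at h1
    rw [Set.inter_eq_left.mpr (singleton_subset_iff.mpr hxU)] at h1
    exact hpos h1
  obtain ⟨D, hD, -⟩ := hx₀diff
  -- compose the differentiability limit with the sequence y
  have hseq : Tendsto
      (fun k => |w (y k) - w x₀ - euclDot D (φ i (y k) - φ i x₀)| / dist (y k) x₀)
      atTop (𝓝 0) := hD.comp hytend
  set e : ℕ → ℝ := fun k => euclDot D (v (ψ k)) with hedef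
  have hexpr : ∀ k, |w (y k) - w x₀ - euclDot D (φ i (y k) - φ i x₀)| / dist (y k) x₀
      = |w (y k) / ρ k - e k| := by
    intro k
    have hρ : dist (y k) x₀ = ρ k := rfl
    have hdot : euclDot D (φ i (y k) - φ i x₀) = ρ k * e k := by
      rw [hedef]
      simp only [hvdef]
      rw [euclDot_smul, ← mul_assoc, mul_inv_cancel₀ (hρpos k).ne', one_mul]
    rw [hρ, hw0, sub_zero, hdot,
      show w (y k) - ρ k * e k = ρ k * (w (y k) / ρ k - e k) by
        rw [mul_sub, mul_comm (ρ k) (w (y k) / ρ k), div_mul_cancel₀ _ (hρpos k).ne'],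
      abs_mul, abs_of_pos (hρpos k), mul_div_cancel_left₀ _ (hρpos k).ne']
  simp only [hexpr] at hseq
  have he : Tendsto e atTop (𝓝 (euclDot D ℓ)) :=
    ((euclDot_continuous D).tendsto ℓ).comp hψtend
  -- even subsequence: euclDot D ℓ = 0
  have heventop : Tendsto (fun k : ℕ => 2*k) atTop atTop :=
    StrictMono.tendsto_atTop (fun a b hab => by omega)
  have hoddtop : Tendsto (fun k : ℕ => 2*k+1) atTop atTop :=
    StrictMono.tendsto_atTop (fun a b hab => by omega)
  have heven : Tendsto (fun k => |w (y (2*k)) / ρ (2*k) - e (2*k)|) atTop (𝓝 0) :=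
    hseq.comp heventop
  have heven' : Tendsto (fun k => e (2*k)) atTop (𝓝 0) := by
    refine (tendsto_zero_iff_abs_tendsto_zero _).mpr ?_
    have : (fun k => |w (y (2*k)) / ρ (2*k) - e (2*k)|) = abs ∘ (fun k => e (2*k)) := by
      funext k
      simp only [Function.comp_apply, hweven k, zero_div, zero_sub, abs_neg]
    rwa [this] at heven
  have heven'' : Tendsto (fun k => e (2*k)) atTop (𝓝 (euclDot D ℓ)) := he.comp heventop
  have hDl : euclDot D ℓ = 0 := tendsto_nhds_unique heven'' heven'
  -- odd subsequence: contradiction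
  have hodd : Tendsto (fun k => |w (y (2*k+1)) / ρ (2*k+1) - e (2*k+1)|) atTop (𝓝 0) :=
    hseq.comp hoddtop
  have hodd1 : Tendsto (fun k => w (y (2*k+1)) / ρ (2*k+1) - e (2*k+1)) atTop (𝓝 0) :=
    (tendsto_zero_iff_abs_tendsto_zero _).mpr hodd
  have hodd2 : Tendsto (fun k => e (2*k+1)) atTop (𝓝 0) := by
    have := he.comp hoddtop
    rwa [hDl] at this
  have hodd3 : Tendsto (fun k => w (y (2*k+1)) / ρ (2*k+1)) atTop (𝓝 0) := by
    have := hodd1.add hodd2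
    simpa using this
  have hge : (3/4 : ℝ) ≤ 0 := by
    refine ge_of_tendsto hodd3 (Eventually.of_forall (fun k => ?_))
    rw [le_div_iff₀ (hρpos (2*k+1))]
    linarith [hwodd k]
  linarith
end

section
/- Let (U,φ) be an n-dimensional chart in a metric measure space (X,d,μ) and x₀ ∈ U. The following are equivalent: (1) there exist λ > 0 and a sequence x_m → x₀ in X such that for every v ∈ S^{n−1}, liminf_{m→∞} max_{0≤i<n} |(φ(x_{mn+i})−φ(x₀))·v| / d(x_{mn+i},x₀) ≥ λ; (2) there exists λ > 0 such that for every v ∈ S^{n−1}, limsup_{x→x₀} |(φ(x)−φ(x₀))·v| / d(x,x₀) ≥ λ; (3) for every f: X → ℝ, if there exists Df(x₀) ∈ ℝⁿ with limsup_{x→x₀} |f(x)−f(x₀)−Df(x₀)·(φ(x)−φ(x₀))|/d(x,x₀) = 0, then Df(x₀) is unique. -/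
open MeasureTheory Metric Filter Set Topology
open scoped ENNReal NNReal

open scoped RealInnerProductSpace

namespace ChartAux

lemma euclDot_eq_inner {n : ℕ} (a b : EuclideanSpace ℝ (Fin n)) :
    euclDot a b = ⟪a, b⟫ := by
  simp [euclDot, PiLp.inner_apply, RCLike.inner_apply, conj_trivial]
  exact Finset.sum_congr rfl fun _ _ => mul_comm _ _

lemma abs_euclDot_le {n : ℕ} (a b : EuclideanSpace ℝ (Fin n)) :
    |euclDot a b| ≤ ‖a‖ * ‖b‖ := by
  rw [euclDot_eq_inner]; exact abs_real_inner_le_norm a b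

lemma euclDot_sub_left {n : ℕ} (a b c : EuclideanSpace ℝ (Fin n)) :
    euclDot (a - b) c = euclDot a c - euclDot b c := by
  simp [euclDot, sub_mul, Finset.sum_sub_distrib]

lemma euclDot_smul_left {n : ℕ} (r : ℝ) (a c : EuclideanSpace ℝ (Fin n)) :
    euclDot (r • a) c = r * euclDot a c := by
  simp [euclDot, Finset.mul_sum, mul_assoc]

lemma euclDot_zero_left {n : ℕ} (c : EuclideanSpace ℝ (Fin n)) :
    euclDot 0 c = 0 := by simp [euclDot]

lemma euclDot_comm {n : ℕ} (a b : EuclideanSpace ℝ (Fin n)) : euclDot a b = euclDot b a := by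
  simp [euclDot, mul_comm]

lemma euclDot_sub_right {n : ℕ} (a b c : EuclideanSpace ℝ (Fin n)) :
    euclDot a (b - c) = euclDot a b - euclDot a c := by
  simp [euclDot, mul_sub, Finset.sum_sub_distrib]

section helpers
variable {X : Type*} [MetricSpace X] {n : ℕ} {φ : X → EuclideanSpace ℝ (Fin n)} {x₀ : X}

lemma G_nonneg (v : EuclideanSpace ℝ (Fin n)) (y : X) :
    0 ≤ |euclDot (φ y - φ x₀) v| / dist y x₀ :=
  div_nonneg (abs_nonneg _) dist_nonneg

lemma G_le {K : ℝ≥0} (hK : LipschitzWith K φ) {v : EuclideanSpace ℝ (Fin n)}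
    (hv : ‖v‖ = 1) (y : X) :
    |euclDot (φ y - φ x₀) v| / dist y x₀ ≤ (K : ℝ) := by
  rcases eq_or_ne y x₀ with rfl | hy
  · simp [dist_self, K.coe_nonneg]
  · have hd : 0 < dist y x₀ := dist_pos.2 hy
    rw [div_le_iff₀ hd]
    calc |euclDot (φ y - φ x₀) v| ≤ ‖φ y - φ x₀‖ * ‖v‖ := abs_euclDot_le _ _
      _ = dist (φ y) (φ x₀) := by rw [hv, mul_one, dist_eq_norm]
      _ ≤ K * dist y x₀ := hK.dist_le_mul y x₀

lemma limsup_of_bot (h : (𝓝[≠] x₀) = ⊥) (u : X → ℝ) : limsup u (𝓝[≠] x₀) = 0 := by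
  rw [h]
  have : {a : ℝ | ∀ᶠ z in (⊥ : Filter X), u z ≤ a} = univ := by
    ext a; simp
  rw [limsup, limsSup]
  simp only [eventually_map]
  rw [this, csInf_of_not_bddBelow, Real.sInf_empty]
  rintro ⟨b, hb⟩
  exact absurd (hb (mem_univ (b - 1))) (by linarith)

lemma exists_unit (hn : 0 < n) : ∃ v : EuclideanSpace ℝ (Fin n), ‖v‖ = 1 :=
  ⟨EuclideanSpace.single ⟨0, hn⟩ (1 : ℝ), by simp [EuclideanSpace.norm_single]⟩

end helpers

section main
variable {X : Type*} [MetricSpace X] {n : ℕ} {φ : X → EuclideanSpace ℝ (Fin n)} {x₀ : X}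
  {K : ℝ≥0} {lam δ : ℝ}

lemma neBot_of_stmt2 (hn : 0 < n) (hlam : 0 < lam)
    (h2 : ∀ v : EuclideanSpace ℝ (Fin n), ‖v‖ = 1 →
      lam ≤ limsup (fun x => |euclDot (φ x - φ x₀) v| / dist x x₀) (𝓝[≠] x₀)) :
    (𝓝[≠] x₀).NeBot := by
  refine ⟨fun hbot => ?_⟩
  obtain ⟨v, hv⟩ := exists_unit (n := n) hn
  have := h2 v hv
  rw [limsup_of_bot hbot] at this
  linarith

/-- Point-picking: near `x₀` there are points on which the directional ratio exceeds `lam/2`. -/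

lemma point_pick (hK : LipschitzWith K φ) (hlam : 0 < lam)
    (h2 : ∀ v : EuclideanSpace ℝ (Fin n), ‖v‖ = 1 →
      lam ≤ limsup (fun x => |euclDot (φ x - φ x₀) v| / dist x x₀) (𝓝[≠] x₀))
    [hne : (𝓝[≠] x₀).NeBot]
    {v : EuclideanSpace ℝ (Fin n)} (hv : ‖v‖ = 1) {δ : ℝ} (hδ : 0 < δ) :
    ∃ y, dist y x₀ < δ ∧ y ≠ x₀ ∧ lam / 2 < |euclDot (φ y - φ x₀) v| / dist y x₀ := by
  have hbdd : IsBoundedUnder (· ≥ ·) (𝓝[≠] x₀) (fun y => |euclDot (φ y - φ x₀) v| / dist y x₀) :=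
    ⟨0, eventually_map.2 (Eventually.of_forall fun y => G_nonneg v y)⟩
  have hcob : IsCoboundedUnder (· ≤ ·) (𝓝[≠] x₀)
      (fun y => |euclDot (φ y - φ x₀) v| / dist y x₀) := hbdd.isCoboundedUnder_le
  have hfreq : ∃ᶠ y in 𝓝[≠] x₀, lam / 2 < |euclDot (φ y - φ x₀) v| / dist y x₀ :=
    frequently_lt_of_lt_limsup hcob (lt_of_lt_of_le (by linarith) (h2 v hv))
  have hmem : (ball x₀ δ ∩ {x₀}ᶜ : Set X) ∈ 𝓝[≠] x₀ :=
    inter_mem (nhdsWithin_le_nhds (ball_mem_nhds x₀ hδ)) self_mem_nhdsWithin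
  obtain ⟨y, hy, hgy⟩ := (hfreq.and_eventually (eventually_of_mem hmem fun y hy => hy)).exists
  exact ⟨y, hgy.1, hgy.2, hy⟩

lemma cover_lemma (hn : 0 < n) (hlam : 0 < lam)
    (hpt : ∀ v : EuclideanSpace ℝ (Fin n), ‖v‖ = 1 →
      ∃ y, dist y x₀ < δ ∧ y ≠ x₀ ∧ lam / 2 < |euclDot (φ y - φ x₀) v| / dist y x₀) :
    ∃ z : Fin n → X, (∀ i, dist (z i) x₀ < δ ∧ z i ≠ x₀) ∧
      ∀ v : EuclideanSpace ℝ (Fin n), ‖v‖ = 1 →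
        ∃ i, lam / (2 * n) ≤ |euclDot (φ (z i) - φ x₀) v| / dist (z i) x₀ := by
  classical
  set S : Set (EuclideanSpace ℝ (Fin n)) := sphere 0 1 with hS
  choose Y hY1 hY2 hY3 using fun v : S => hpt v.1 (mem_sphere_zero_iff_norm.mp v.2)
  set w : S → EuclideanSpace ℝ (Fin n) :=
    fun v => (dist (Y v) x₀)⁻¹ • (φ (Y v) - φ x₀) with hw
  have key : ∀ (v : S) (u : EuclideanSpace ℝ (Fin n)),
      |euclDot (w v) u| = |euclDot (φ (Y v) - φ x₀) u| / dist (Y v) x₀ := by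
    intro v u
    rw [hw]
    simp only []
    rw [euclDot_smul_left, abs_mul, abs_inv, abs_of_nonneg dist_nonneg, inv_mul_eq_div]
  -- open cover of the sphere
  set O : S → Set (EuclideanSpace ℝ (Fin n)) :=
    fun v => {u | lam / 2 < |euclDot (w v) u|} with hO
  have hOopen : ∀ v, IsOpen (O v) := by
    intro v
    have hc : Continuous fun u : EuclideanSpace ℝ (Fin n) => euclDot (w v) u := by
      simp only [euclDot_eq_inner]
      exact continuous_const.inner continuous_id
    exact isOpen_lt continuous_const (continuous_abs.comp hc)
  have hcover : S ⊆ ⋃ v : S, O v := by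
    intro u hu
    refine mem_iUnion.2 ⟨⟨u, hu⟩, ?_⟩
    have := hY3 ⟨u, hu⟩
    rw [hO]
    simpa [key ⟨u, hu⟩ u] using this
  obtain ⟨t, ht⟩ := (isCompact_sphere (0 : EuclideanSpace ℝ (Fin n)) 1).elim_finite_subcover
    O hOopen hcover
  have hcov : ∀ u : EuclideanSpace ℝ (Fin n), ‖u‖ = 1 →
      ∃ v ∈ t, lam / 2 < |euclDot (w v) u| := by
    intro u hu
    have := ht (mem_sphere_zero_iff_norm.2 hu)
    simpa [hO, mem_iUnion] using this
  obtain ⟨u₀, hu₀⟩ := exists_unit (n := n) hn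
  obtain ⟨v₀, hv₀t, -⟩ := hcov u₀ hu₀
  -- the selected vectors span everything
  have hspan : Submodule.span ℝ (w '' ↑t) = ⊤ := by
    by_contra hne
    have hbot : (Submodule.span ℝ (w '' (↑t : Set S)))ᗮ ≠ ⊥ := by
      rwa [Ne, Submodule.orthogonal_eq_bot_iff]
    obtain ⟨u, huo, hu0⟩ := Submodule.ne_bot_iff _ |>.1 hbot
    set u' := (‖u‖⁻¹ : ℝ) • u with hu'
    have hu'n : ‖u'‖ = 1 := norm_smul_inv_norm hu0
    obtain ⟨v, hvt, hlt⟩ := hcov u' hu'n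
    have hmem : u' ∈ (Submodule.span ℝ (w '' (↑t : Set S)))ᗮ :=
      Submodule.smul_mem _ _ huo
    have h0 : euclDot (w v) u' = 0 := by
      rw [euclDot_eq_inner]
      exact (Submodule.mem_orthogonal _ u').1 hmem (w v)
        (Submodule.subset_span (mem_image_of_mem w (Finset.mem_coe.2 hvt)))
    rw [h0] at hlt
    simp at hlt
    linarith
  -- matrices of n-tuples of selected vectors
  set M : (Fin n → {v : S // v ∈ t}) → Matrix (Fin n) (Fin n) ℝ :=
    fun σ => Matrix.of fun i j => w (σ j).1 i with hM
  -- some tuple has nonzero determinant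
  have hdet_ex : ∃ σ, (M σ).det ≠ 0 := by
    obtain ⟨b, hb_sub, hb_span, hb_ind⟩ := exists_linearIndependent ℝ (w '' (↑t : Set S))
    haveI : Fintype b := (Set.Finite.subset (t.finite_toSet.image w) hb_sub).fintype
    have hb_top : Submodule.span ℝ (Set.range ((↑) : b → EuclideanSpace ℝ (Fin n))) = ⊤ := by
      rw [Subtype.range_coe, hb_span, hspan]
    let B : Module.Basis b ℝ (EuclideanSpace ℝ (Fin n)) := Module.Basis.mk hb_ind (le_of_eq hb_top.symm)
    have hcard : Fintype.card b = n := by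
      have h1 := Module.finrank_eq_card_basis B
      rw [finrank_euclideanSpace_fin] at h1
      omega
    let e : b ≃ Fin n := Fintype.equivFinOfCardEq hcard
    choose τ hτt hτw using fun i : Fin n => hb_sub (e.symm i).2
    refine ⟨fun i => ⟨τ i, hτt i⟩, ?_⟩
    intro h0
    obtain ⟨c, hc0, hc⟩ := Matrix.exists_mulVec_eq_zero_iff.2 h0
    have hli : LinearIndependent ℝ (fun i : Fin n => ((e.symm i : b) : EuclideanSpace ℝ (Fin n))) :=
      hb_ind.comp e.symm e.symm.injective
    rw [Fintype.linearIndependent_iff] at hli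
    have hsum : ∑ i, c i • ((e.symm i : b) : EuclideanSpace ℝ (Fin n)) = 0 := by
      apply PiLp.ext
      intro j
      calc (∑ i, c i • ((e.symm i : b) : EuclideanSpace ℝ (Fin n))) j
          = EuclideanSpace.proj j (∑ i, c i • ((e.symm i : b) : EuclideanSpace ℝ (Fin n))) := rfl
        _ = ∑ i, c i * ((e.symm i : b) : EuclideanSpace ℝ (Fin n)) j := by
            rw [map_sum]; simp
        _ = ∑ i, c i * w (τ i) j := by
            refine Finset.sum_congr rfl fun i _ => ?_
            rw [hτw i]
        _ = (0 : EuclideanSpace ℝ (Fin n)) j := by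
            have h := congrFun hc j
            simp only [Matrix.mulVec, dotProduct, hM, Matrix.of_apply,
              Pi.zero_apply] at h
            simp only [PiLp.zero_apply]
            rw [← h]
            exact Finset.sum_congr rfl fun i _ => mul_comm _ _
    obtain ⟨i, hi⟩ := Function.ne_iff.1 hc0
    exact hi (hli c hsum i)
  -- maximize |det| over tuples
  haveI : Nonempty {v : S // v ∈ t} := ⟨⟨v₀, hv₀t⟩⟩
  obtain ⟨σm, hσm⟩ := Finite.exists_max (fun σ : Fin n → {v : S // v ∈ t} => |(M σ).det|)
  have hdet : (M σm).det ≠ 0 := by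
    obtain ⟨σ₁, hσ₁⟩ := hdet_ex
    intro h
    have h2 := hσm σ₁
    rw [h, abs_zero] at h2
    exact hσ₁ (abs_eq_zero.1 (le_antisymm h2 (abs_nonneg _)))
  -- final selection
  refine ⟨fun i => Y (σm i).1, fun i => ⟨hY1 _, hY2 _⟩, ?_⟩
  intro v hv
  obtain ⟨v₁, hv₁t, hlt⟩ := hcov v hv
  -- Cramer's rule representation
  set bv : Fin n → ℝ := fun j => w v₁ j with hbv
  set a : Fin n → ℝ := fun i => ((M σm).det)⁻¹ * Matrix.cramer (M σm) bv i with ha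
  have hA : ∀ i, |a i| ≤ 1 := by
    intro i
    have hupd : (M σm).updateCol i bv = M (Function.update σm i ⟨v₁, hv₁t⟩) := by
      ext i' j
      rw [Matrix.updateCol_apply]
      simp only [hM, Matrix.of_apply, Function.update_apply]
      split <;> rfl
    have h1 : |Matrix.cramer (M σm) bv i| ≤ |(M σm).det| := by
      rw [Matrix.cramer_apply, hupd]
      exact hσm _
    rw [ha]
    simp only []
    rw [abs_mul, abs_inv]
    rw [inv_mul_le_iff₀ (abs_pos.2 hdet), mul_one]
    exact h1
  have hrepr : ∀ j, bv j = ∑ i, a i * w (σm i).1 j := by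
    intro j
    have h1 : (M σm).mulVec (Matrix.cramer (M σm) bv) = (M σm).det • bv :=
      Matrix.mulVec_cramer _ _
    have h2 : (M σm).mulVec a = bv := by
      have : a = ((M σm).det)⁻¹ • (Matrix.cramer (M σm) bv) := by
        funext i; simp [ha, smul_eq_mul]
      rw [this, Matrix.mulVec_smul, h1, smul_smul, inv_mul_cancel₀ hdet, one_smul]
    have := congrFun h2 j
    simp only [Matrix.mulVec, dotProduct, hM, Matrix.of_apply] at this
    rw [← this]
    exact Finset.sum_congr rfl fun i _ => mul_comm _ _
  have hlin : euclDot (w v₁) v = ∑ i, a i * euclDot (w (σm i).1) v := by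
    simp only [euclDot]
    calc ∑ j, w v₁ j * v j = ∑ j, (∑ i, a i * w (σm i).1 j) * v j := by
          refine Finset.sum_congr rfl fun j _ => ?_
          rw [← hrepr j]
      _ = ∑ j, ∑ i, a i * w (σm i).1 j * v j := by
          refine Finset.sum_congr rfl fun j _ => ?_
          rw [Finset.sum_mul]
      _ = ∑ i, ∑ j, a i * w (σm i).1 j * v j := Finset.sum_comm
      _ = ∑ i, a i * ∑ j, w (σm i).1 j * v j := by
          refine Finset.sum_congr rfl fun i _ => ?_
          rw [Finset.mul_sum]
          exact Finset.sum_congr rfl fun j _ => by ring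
  -- conclude
  by_contra hcon
  push_neg at hcon
  have hcon' : ∀ i : Fin n, |euclDot (w (σm i).1) v| < lam / (2 * n) := by
    intro i
    have := hcon i
    rwa [key (σm i).1 v]
  have hsumlt : ∑ i : Fin n, |euclDot (w (σm i).1) v| < lam / 2 := by
    calc ∑ i : Fin n, |euclDot (w (σm i).1) v|
        < ∑ _i : Fin n, lam / (2 * n) := by
          refine Finset.sum_lt_sum_of_nonempty ?_ fun i _ => hcon' i
          exact Finset.univ_nonempty_iff.2 ⟨⟨0, hn⟩⟩
      _ = n * (lam / (2 * n)) := by rw [Finset.sum_const, Finset.card_univ]; simp [nsmul_eq_mul]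
      _ = lam / 2 := by
          field_simp
  have hle : |euclDot (w v₁) v| ≤ ∑ i : Fin n, |euclDot (w (σm i).1) v| := by
    rw [hlin]
    calc |∑ i, a i * euclDot (w (σm i).1) v| ≤ ∑ i, |a i * euclDot (w (σm i).1) v| :=
          Finset.abs_sum_le_sum_abs _ _
      _ ≤ ∑ i, |euclDot (w (σm i).1) v| := by
          refine Finset.sum_le_sum fun i _ => ?_
          rw [abs_mul]
          exact mul_le_of_le_one_left (abs_nonneg _) (hA i)
  linarith

lemma stmt2_to_stmt1 (hn : 0 < n) (hK : LipschitzWith K φ) (hlam : 0 < lam)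
    (h2 : ∀ v : EuclideanSpace ℝ (Fin n), ‖v‖ = 1 →
      lam ≤ limsup (fun x => |euclDot (φ x - φ x₀) v| / dist x x₀) (𝓝[≠] x₀)) :
    ∃ lam' : ℝ, 0 < lam' ∧ ∃ x : ℕ → X, Tendsto x atTop (𝓝 x₀) ∧
      ∀ v : EuclideanSpace ℝ (Fin n), ‖v‖ = 1 →
        lam' ≤ liminf (fun m => ⨆ i : Fin n,
          |euclDot (φ (x (m * n + (i : ℕ))) - φ x₀) v| / dist (x (m * n + (i : ℕ))) x₀)
          atTop := by
  haveI := neBot_of_stmt2 hn hlam h2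
  have hpt : ∀ m : ℕ, ∃ z : Fin n → X,
      (∀ i, dist (z i) x₀ < ((m : ℝ) + 1)⁻¹ ∧ z i ≠ x₀) ∧
      ∀ v : EuclideanSpace ℝ (Fin n), ‖v‖ = 1 →
        ∃ i, lam / (2 * n) ≤ |euclDot (φ (z i) - φ x₀) v| / dist (z i) x₀ := by
    intro m
    exact cover_lemma hn hlam fun v hv => point_pick hK hlam h2 hv (by positivity)
  choose z hz1 hz2 using hpt
  have hnn : (0 : ℝ) < n := by exact_mod_cast hn
  refine ⟨lam / (2 * n), by positivity,
    fun k => z (k / n) ⟨k % n, Nat.mod_lt _ hn⟩, ?_, ?_⟩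
  · -- tendsto
    rw [Metric.tendsto_atTop]
    intro ε hε
    obtain ⟨M, hM⟩ := exists_nat_gt ε⁻¹
    refine ⟨n * (M + 1), fun k hk => ?_⟩
    have hdiv : M + 1 ≤ k / n := (Nat.le_div_iff_mul_le hn).2 (by rwa [Nat.mul_comm (M+1) n])
    have h1 : dist (z (k / n) ⟨k % n, Nat.mod_lt _ hn⟩ ) x₀ < ((k / n : ℕ) + 1 : ℝ)⁻¹ :=
      (hz1 _ _).1
    have h2' : ((k / n : ℕ) + 1 : ℝ)⁻¹ < ε := by
      have hM1 : (ε⁻¹ : ℝ) < ((k / n : ℕ) + 1 : ℝ) := by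
        have : (M : ℝ) ≤ ((k / n : ℕ) : ℝ) := by exact_mod_cast le_trans (Nat.le_succ M) hdiv
        linarith
      have hp : (0 : ℝ) < ((k / n : ℕ) + 1 : ℝ) := by positivity
      exact (inv_lt_comm₀ hp hε).2 hM1
    exact lt_trans h1 h2'
  · -- liminf
    intro v hv
    have hbdd : ∀ m : ℕ, BddAbove (Set.range fun i : Fin n =>
        |euclDot (φ (z m i) - φ x₀) v| / dist (z m i) x₀) :=
      fun m => (Set.finite_range _).bddAbove
    have hxz : ∀ (m : ℕ) (i : Fin n),
        z ((m * n + (i : ℕ)) / n) ⟨(m * n + (i : ℕ)) % n, Nat.mod_lt _ hn⟩ = z m i := by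
      intro m i
      have hd : (m * n + (i : ℕ)) / n = m := by
        rw [Nat.add_comm, Nat.add_mul_div_right _ _ hn, Nat.div_eq_of_lt i.isLt, Nat.zero_add]
      have hm : (m * n + (i : ℕ)) % n = (i : ℕ) := by
        rw [Nat.add_comm, Nat.add_mul_mod_self_right, Nat.mod_eq_of_lt i.isLt]
      have hfin : (⟨(m * n + (i : ℕ)) % n, Nat.mod_lt _ hn⟩ : Fin n) = i := Fin.ext hm
      rw [hd, hfin]
    have heq : (fun m => ⨆ i : Fin n,
        |euclDot (φ ((fun k => z (k / n) ⟨k % n, Nat.mod_lt _ hn⟩) (m * n + (i : ℕ))) - φ x₀) v| /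
          dist ((fun k => z (k / n) ⟨k % n, Nat.mod_lt _ hn⟩) (m * n + (i : ℕ))) x₀)
        = fun m => ⨆ i : Fin n,
          |euclDot (φ (z m i) - φ x₀) v| / dist (z m i) x₀ := by
      funext m
      refine iSup_congr fun i => ?_
      beta_reduce
      rw [hxz m i]
    rw [heq]
    have hcob : IsCoboundedUnder (· ≥ ·) atTop (fun m => ⨆ i : Fin n,
        |euclDot (φ (z m i) - φ x₀) v| / dist (z m i) x₀) := by
      refine IsBoundedUnder.isCoboundedUnder_ge ⟨(K : ℝ), eventually_map.2 (Eventually.of_forall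
        fun m => ?_)⟩
      exact Real.iSup_le (fun i => G_le hK hv _) K.coe_nonneg
    refine le_liminf_of_le hcob (Eventually.of_forall fun m => ?_)
    obtain ⟨i, hi⟩ := hz2 m v hv
    exact le_trans hi (le_ciSup (hbdd m) i)

lemma G_eq_zero_of_eq (v : EuclideanSpace ℝ (Fin n)) :
    |euclDot (φ x₀ - φ x₀) v| / dist x₀ x₀ = 0 := by
  simp [euclDot_zero_left, sub_self]

lemma stmt1_to_stmt2 (hn : 0 < n) (hK : LipschitzWith K φ) (hlam : 0 < lam)
    {x : ℕ → X} (hx : Tendsto x atTop (𝓝 x₀))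
    (h1 : ∀ v : EuclideanSpace ℝ (Fin n), ‖v‖ = 1 →
      lam ≤ liminf (fun m => ⨆ i : Fin n,
        |euclDot (φ (x (m * n + (i : ℕ))) - φ x₀) v| / dist (x (m * n + (i : ℕ))) x₀) atTop) :
    ∀ v : EuclideanSpace ℝ (Fin n), ‖v‖ = 1 →
      lam ≤ limsup (fun y => |euclDot (φ y - φ x₀) v| / dist y x₀) (𝓝[≠] x₀) := by
  intro v hv
  refine le_of_forall_pos_le_add fun ε hε => ?_
  set δ : ℝ := min ε (lam / 2) with hδdef
  have hδ : 0 < δ := lt_min hε (half_pos hlam)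
  have hδlam : δ ≤ lam / 2 := min_le_right _ _
  have hδε : δ ≤ ε := min_le_left _ _
  -- eventually the sup exceeds lam - δ
  have hblow : IsBoundedUnder (· ≥ ·) atTop (fun m => ⨆ i : Fin n,
      |euclDot (φ (x (m * n + (i : ℕ))) - φ x₀) v| / dist (x (m * n + (i : ℕ))) x₀) := by
    refine ⟨0, eventually_map.2 (Eventually.of_forall fun m => ?_)⟩
    exact le_ciSup_of_le ((Set.finite_range _).bddAbove) ⟨0, hn⟩ (G_nonneg v _)
  have hev : ∀ᶠ m in atTop, lam - δ < ⨆ i : Fin n,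
      |euclDot (φ (x (m * n + (i : ℕ))) - φ x₀) v| / dist (x (m * n + (i : ℕ))) x₀ :=
    eventually_lt_of_lt_liminf (lt_of_lt_of_le (by linarith) (h1 v hv)) hblow
  -- pick good indices
  have hevP : ∀ᶠ m in atTop, ∃ i : Fin n,
      lam - δ < |euclDot (φ (x (m * n + (i : ℕ))) - φ x₀) v| / dist (x (m * n + (i : ℕ))) x₀ := by
    refine hev.mono fun m hm => ?_
    by_contra hc
    push_neg at hc
    have : (⨆ i : Fin n,
        |euclDot (φ (x (m * n + (i : ℕ))) - φ x₀) v| / dist (x (m * n + (i : ℕ))) x₀) ≤ lam - δ :=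
      Real.iSup_le (fun i => hc i) (by linarith)
    linarith
  classical
  set I : ℕ → Fin n := fun m => if h : (∃ i : Fin n,
      lam - δ < |euclDot (φ (x (m * n + (i : ℕ))) - φ x₀) v| / dist (x (m * n + (i : ℕ))) x₀)
    then h.choose else ⟨0, hn⟩ with hI
  set y : ℕ → X := fun m => x (m * n + (I m : ℕ)) with hy
  have hy1 : ∀ᶠ m in atTop, lam - δ < |euclDot (φ (y m) - φ x₀) v| / dist (y m) x₀ := by
    refine hevP.mono fun m hm => ?_
    rw [hy, hI]
    simp only [dif_pos hm]
    exact hm.choose_spec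
  have hy2 : ∀ᶠ m in atTop, y m ≠ x₀ := by
    refine hy1.mono fun m hm hmx => ?_
    rw [hmx] at hm
    rw [G_eq_zero_of_eq] at hm
    linarith
  have hty : Tendsto y atTop (𝓝 x₀) := by
    refine hx.comp (tendsto_atTop_mono (fun m => ?_) tendsto_id)
    calc (id m : ℕ) = m := rfl
      _ ≤ m * n := Nat.le_mul_of_pos_right m hn
      _ ≤ m * n + (I m : ℕ) := Nat.le_add_right _ _
  have htyF : Tendsto y atTop (𝓝[≠] x₀) := by
    rw [tendsto_nhdsWithin_iff]
    exact ⟨hty, hy2⟩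
  have hfreq : ∃ᶠ z in 𝓝[≠] x₀, lam - δ ≤ |euclDot (φ z - φ x₀) v| / dist z x₀ :=
    htyF.frequently ((hy1.mono fun m hm => le_of_lt hm).frequently)
  have hls : lam - δ ≤ limsup (fun z => |euclDot (φ z - φ x₀) v| / dist z x₀) (𝓝[≠] x₀) :=
    le_limsup_of_frequently_le hfreq
      ⟨(K : ℝ), eventually_map.2 (Eventually.of_forall fun z => G_le hK hv z)⟩
  linarith

lemma stmt2_to_stmt3 (hK : LipschitzWith K φ) (hlam : 0 < lam)
    (h2 : ∀ v : EuclideanSpace ℝ (Fin n), ‖v‖ = 1 →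
      lam ≤ limsup (fun x => |euclDot (φ x - φ x₀) v| / dist x x₀) (𝓝[≠] x₀)) :
    ∀ (f : X → ℝ) (D D' : EuclideanSpace ℝ (Fin n)),
      DiffAt f φ x₀ D → DiffAt f φ x₀ D' → D = D' := by
  intro f D D' hD hD'
  by_contra hne
  have hΔ : D' - D ≠ 0 := sub_ne_zero.2 (Ne.symm hne)
  have hn : 0 < n := by
    rcases Nat.eq_zero_or_pos n with h0 | h
    · exfalso
      apply hΔ
      subst h0
      exact PiLp.ext fun i => i.elim0
    · exact h
  haveI := neBot_of_stmt2 hn hlam h2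
  set v : EuclideanSpace ℝ (Fin n) := (‖D' - D‖⁻¹ : ℝ) • (D' - D) with hvdef
  have hv : ‖v‖ = 1 := norm_smul_inv_norm hΔ
  have htend : Tendsto (fun z => |euclDot (D' - D) (φ z - φ x₀)| / dist z x₀) (𝓝[≠] x₀)
      (𝓝 0) := by
    have hsum : Tendsto (fun z =>
        |f z - f x₀ - euclDot D (φ z - φ x₀)| / dist z x₀ +
        |f z - f x₀ - euclDot D' (φ z - φ x₀)| / dist z x₀) (𝓝[≠] x₀) (𝓝 0) := by
      have := hD.add hD'
      rwa [add_zero] at this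
    refine squeeze_zero' (Eventually.of_forall fun z => div_nonneg (abs_nonneg _) dist_nonneg)
      (Eventually.of_forall fun z => ?_) hsum
    have hnum : euclDot (D' - D) (φ z - φ x₀) =
        (f z - f x₀ - euclDot D (φ z - φ x₀)) - (f z - f x₀ - euclDot D' (φ z - φ x₀)) := by
      rw [euclDot_sub_left]; ring
    rw [hnum, ← add_div]
    refine div_le_div_of_nonneg_right ?_ dist_nonneg
    exact (abs_sub _ _)
  have htendv : Tendsto (fun z => |euclDot (φ z - φ x₀) v| / dist z x₀) (𝓝[≠] x₀) (𝓝 0) := by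
    have heq : (fun z => |euclDot (φ z - φ x₀) v| / dist z x₀) =
        fun z => ‖D' - D‖⁻¹ * (|euclDot (D' - D) (φ z - φ x₀)| / dist z x₀) := by
      funext z
      rw [euclDot_comm, hvdef, euclDot_smul_left, abs_mul, abs_inv, abs_norm, mul_div_assoc,
        euclDot_comm]
    rw [heq]
    have := htend.const_mul (‖D' - D‖⁻¹)
    rwa [mul_zero] at this
  have hzero : limsup (fun z => |euclDot (φ z - φ x₀) v| / dist z x₀) (𝓝[≠] x₀) = 0 :=
    htendv.limsup_eq
  have := h2 v hv
  rw [hzero] at this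
  linarith

lemma G_compare (hK : LipschitzWith K φ) (u u' : EuclideanSpace ℝ (Fin n)) (z : X) :
    |euclDot (φ z - φ x₀) u| / dist z x₀ ≤
      |euclDot (φ z - φ x₀) u'| / dist z x₀ + (K : ℝ) * ‖u - u'‖ := by
  rcases eq_or_ne z x₀ with rfl | hz
  · simp only [sub_self, euclDot_zero_left, abs_zero, dist_self, div_zero, zero_add]
    positivity
  · have hd : 0 < dist z x₀ := dist_pos.2 hz
    have h1 : |euclDot (φ z - φ x₀) u| ≤ |euclDot (φ z - φ x₀) u'| +
        ‖φ z - φ x₀‖ * ‖u - u'‖ := by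
      have he : euclDot (φ z - φ x₀) u =
          euclDot (φ z - φ x₀) u' + euclDot (φ z - φ x₀) (u - u') := by
        rw [euclDot_sub_right]; ring
      rw [he]
      refine le_trans (abs_add_le _ _) ?_
      gcongr
      exact abs_euclDot_le _ _
    have h2 : ‖φ z - φ x₀‖ ≤ (K : ℝ) * dist z x₀ := by
      rw [← dist_eq_norm]
      exact hK.dist_le_mul z x₀
    rw [div_le_iff₀ hd, add_mul, div_mul_cancel₀ _ (ne_of_gt hd)]
    refine le_trans h1 ?_
    have h3 : ‖φ z - φ x₀‖ * ‖u - u'‖ ≤ ((K : ℝ) * dist z x₀) * ‖u - u'‖ :=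
      mul_le_mul_of_nonneg_right h2 (norm_nonneg _)
    nlinarith [h3]

lemma stmt3_to_stmt2 (hn : 0 < n) (hK : LipschitzWith K φ)
    (h3 : ∀ (f : X → ℝ) (D D' : EuclideanSpace ℝ (Fin n)),
      DiffAt f φ x₀ D → DiffAt f φ x₀ D' → D = D') :
    ∃ lam : ℝ, 0 < lam ∧ ∀ v : EuclideanSpace ℝ (Fin n), ‖v‖ = 1 →
      lam ≤ limsup (fun x => |euclDot (φ x - φ x₀) v| / dist x x₀) (𝓝[≠] x₀) := by
  by_contra h2n
  push_neg at h2n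
  have hvk : ∀ k : ℕ, ∃ v : EuclideanSpace ℝ (Fin n), ‖v‖ = 1 ∧
      limsup (fun x => |euclDot (φ x - φ x₀) v| / dist x x₀) (𝓝[≠] x₀) < ((k : ℝ) + 1)⁻¹ := by
    intro k
    obtain ⟨v, hv, hlt⟩ := h2n (((k : ℝ) + 1)⁻¹) (by positivity)
    exact ⟨v, hv, hlt⟩
  choose vk hvk1 hvk2 using hvk
  have hmem : ∀ k, vk k ∈ sphere (0 : EuclideanSpace ℝ (Fin n)) 1 :=
    fun k => mem_sphere_zero_iff_norm.2 (hvk1 k)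
  obtain ⟨v, hvS, ψ, hψ, hψtend⟩ := (isCompact_sphere (0 : EuclideanSpace ℝ (Fin n)) 1)
    |>.tendsto_subseq hmem
  have hv : ‖v‖ = 1 := mem_sphere_zero_iff_norm.1 hvS
  have hclaim : Tendsto (fun z => |euclDot (φ z - φ x₀) v| / dist z x₀) (𝓝[≠] x₀) (𝓝 0) := by
    rw [Metric.tendsto_nhds]
    intro ε hε
    have ht0 : Tendsto (fun k : ℕ => ((k : ℝ) + 1)⁻¹) atTop (𝓝 0) := by
      simpa [one_div] using tendsto_one_div_add_atTop_nhds_zero_nat (𝕜 := ℝ)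
    have h1 : ∀ᶠ k : ℕ in atTop, ((k : ℝ) + 1)⁻¹ < ε / 2 :=
      ht0.eventually_lt_const (half_pos hε)
    have htn : Tendsto (fun k => (K : ℝ) * ‖v - vk (ψ k)‖) atTop (𝓝 0) := by
      have h0 : Tendsto (fun k => ‖v - vk (ψ k)‖) atTop (𝓝 0) := by
        have := (tendsto_const_nhds (x := v) (f := atTop)).sub hψtend
        rw [sub_self] at this
        simpa using this.norm
      have := h0.const_mul (K : ℝ)
      rwa [mul_zero] at this
    have h2 : ∀ᶠ k in atTop, (K : ℝ) * ‖v - vk (ψ k)‖ < ε / 2 :=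
      htn.eventually_lt_const (half_pos hε)
    obtain ⟨k, hk1, hk2⟩ := (h1.and h2).exists
    have hψk : ((k : ℝ) + 1)⁻¹ ≥ ((ψ k : ℝ) + 1)⁻¹ := by
      have : (k : ℝ) ≤ (ψ k : ℝ) := by exact_mod_cast hψ.le_apply
      have hp : (0 : ℝ) < (k : ℝ) + 1 := by positivity
      exact inv_anti₀ hp (by linarith)
    have hbdd : IsBoundedUnder (· ≤ ·) (𝓝[≠] x₀)
        (fun x => |euclDot (φ x - φ x₀) (vk (ψ k))| / dist x x₀) :=
      ⟨(K : ℝ), eventually_map.2 (Eventually.of_forall fun z => G_le hK (hvk1 (ψ k)) z)⟩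
    have hev : ∀ᶠ z in 𝓝[≠] x₀,
        |euclDot (φ z - φ x₀) (vk (ψ k))| / dist z x₀ < ((ψ k : ℝ) + 1)⁻¹ :=
      eventually_lt_of_limsup_lt (hvk2 (ψ k)) hbdd
    refine hev.mono fun z hz => ?_
    rw [Real.dist_0_eq_abs, abs_of_nonneg (G_nonneg v z)]
    have hcomp := G_compare (x₀ := x₀) hK v (vk (ψ k)) z
    have : ((ψ k : ℝ) + 1)⁻¹ < ε / 2 := lt_of_le_of_lt hψk hk1
    linarith
  -- apply uniqueness to the zero function
  have hD0 : DiffAt (fun _ : X => (0 : ℝ)) φ x₀ 0 := by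
    unfold DiffAt
    have heq : (fun x : X => |(0 : ℝ) - 0 - euclDot 0 (φ x - φ x₀)| / dist x x₀) =
        fun _ : X => (0 : ℝ) := by
      funext z
      simp [euclDot_zero_left]
    rw [heq]
    exact tendsto_const_nhds
  have hDv : DiffAt (fun _ : X => (0 : ℝ)) φ x₀ v := by
    unfold DiffAt
    have heq : (fun x : X => |(0 : ℝ) - 0 - euclDot v (φ x - φ x₀)| / dist x x₀) =
        fun z => |euclDot (φ z - φ x₀) v| / dist z x₀ := by
      funext z
      rw [euclDot_comm]
      congr 1
      simp [abs_neg]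
    rw [heq]
    exact hclaim
  have h0v := h3 (fun _ => 0) 0 v hD0 hDv
  rw [← h0v] at hv
  simp at hv

end main
end ChartAux

/-- **Uniqueness of chart derivatives.**  Let `(U,φ)` be an `n`-dimensional chart in a metric
measure space `(X,d,μ)` and `x₀ ∈ U`.  The following are equivalent:
(1) there exist `λ > 0` and a sequence `xₘ → x₀` such that for every unit vector `v`,
`liminf_m max_{0≤i<n} |(φ(x_{mn+i})-φ(x₀))·v| / d(x_{mn+i},x₀) ≥ λ`;
(2) there exists `λ > 0` such that for every unit vector `v`,
`limsup_{x→x₀} |(φ(x)-φ(x₀))·v| / d(x,x₀) ≥ λ`;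
(3) any derivative of any function `f : X → ℝ` at `x₀` with respect to `(U,φ)` is unique. -/
theorem chart_derivative_uniqueness_iff
    {X : Type*} [MetricSpace X] [CompleteSpace X] [TopologicalSpace.SeparableSpace X]
    [MeasurableSpace X] [BorelSpace X] (μ : Measure X) [IsFiniteMeasure μ]
    (hiso : μ {x : X | 𝓝[≠] x = ⊥} = 0)
    {n : ℕ} (U : Set X) (φ : X → EuclideanSpace ℝ (Fin n))
    (hU : MeasurableSet U) (hφ : ∃ K : ℝ≥0, LipschitzWith K φ)
    (x₀ : X) (hx₀ : x₀ ∈ U) :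
    ((∃ lam : ℝ, 0 < lam ∧ ∃ x : ℕ → X, Tendsto x atTop (𝓝 x₀) ∧
        ∀ v : EuclideanSpace ℝ (Fin n), ‖v‖ = 1 →
          lam ≤ liminf (fun m => ⨆ i : Fin n,
            |euclDot (φ (x (m * n + (i : ℕ))) - φ x₀) v| / dist (x (m * n + (i : ℕ))) x₀)
            atTop) ↔
      (∃ lam : ℝ, 0 < lam ∧ ∀ v : EuclideanSpace ℝ (Fin n), ‖v‖ = 1 →
        lam ≤ limsup (fun x => |euclDot (φ x - φ x₀) v| / dist x x₀) (𝓝[≠] x₀))) ∧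
    ((∃ lam : ℝ, 0 < lam ∧ ∀ v : EuclideanSpace ℝ (Fin n), ‖v‖ = 1 →
        lam ≤ limsup (fun x => |euclDot (φ x - φ x₀) v| / dist x x₀) (𝓝[≠] x₀)) ↔
      ∀ (f : X → ℝ) (D D' : EuclideanSpace ℝ (Fin n)),
        DiffAt f φ x₀ D → DiffAt f φ x₀ D' → D = D') := by
  classical
  obtain ⟨K, hK⟩ := hφ
  rcases Nat.eq_zero_or_pos n with hn0 | hn
  · -- degenerate case `n = 0`
    subst hn0
    have hsub : ∀ v : EuclideanSpace ℝ (Fin 0), v = 0 := fun v => PiLp.ext fun i => i.elim0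
    have hnu : ∀ v : EuclideanSpace ℝ (Fin 0), ‖v‖ = 1 → False := fun v hv => by
      rw [hsub v, norm_zero] at hv; norm_num at hv
    have s1 : ∃ lam : ℝ, 0 < lam ∧ ∃ x : ℕ → X, Tendsto x atTop (𝓝 x₀) ∧
        ∀ v : EuclideanSpace ℝ (Fin 0), ‖v‖ = 1 →
          lam ≤ liminf (fun m => ⨆ i : Fin 0,
            |euclDot (φ (x (m * 0 + (i : ℕ))) - φ x₀) v| / dist (x (m * 0 + (i : ℕ))) x₀)
            atTop :=
      ⟨1, one_pos, fun _ => x₀, tendsto_const_nhds, fun v hv => absurd (hnu v hv) not_false⟩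
    have s2 : ∃ lam : ℝ, 0 < lam ∧ ∀ v : EuclideanSpace ℝ (Fin 0), ‖v‖ = 1 →
        lam ≤ limsup (fun x => |euclDot (φ x - φ x₀) v| / dist x x₀) (𝓝[≠] x₀) :=
      ⟨1, one_pos, fun v hv => absurd (hnu v hv) not_false⟩
    have s3 : ∀ (f : X → ℝ) (D D' : EuclideanSpace ℝ (Fin 0)),
        DiffAt f φ x₀ D → DiffAt f φ x₀ D' → D = D' :=
      fun f D D' _ _ => (hsub D).trans (hsub D').symm
    exact ⟨iff_of_true s1 s2, iff_of_true s2 s3⟩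
  · refine ⟨⟨?_, ?_⟩, ⟨?_, ?_⟩⟩
    · rintro ⟨lam, hlam, x, hx, h1⟩
      exact ⟨lam, hlam, ChartAux.stmt1_to_stmt2 hn hK hlam hx h1⟩
    · rintro ⟨lam, hlam, h2⟩
      exact ChartAux.stmt2_to_stmt1 hn hK hlam h2
    · rintro ⟨lam, hlam, h2⟩
      exact ChartAux.stmt2_to_stmt3 hK hlam h2
    · intro h3
      exact ChartAux.stmt3_to_stmt2 hn hK h3
end

section
/- Let (U,φ) be an n-dimensional chart in a metric space (X,d), let x₀ ∈ U, λ > 0 and let x_m → x₀ be a sequence in X such that for every v ∈ S^{n−1}, liminf_{m→∞} max_{0≤i<n} |(φ(x_{mn+i})−φ(x₀))·v| / d(x_{mn+i},x₀) ≥ λ. Then for any f: X → ℝ that is differentiable at x₀ with respect to (U,φ) with derivative Df(x₀): (i) ‖Df(x₀)‖ ≤ Lip(f,x₀)/λ, and (ii) (λ/Lip φ)·Lip(f,x₀) ≤ liminf_{m→∞} max_{0≤i<n} |f(x_{mn+i})−f(x₀)| / d(x_{mn+i},x₀), where Lip φ denotes the (global) Lipschitz constant of φ. -/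
open MeasureTheory Metric Filter Set Topology
open scoped ENNReal NNReal

noncomputable section

/-- The pointwise Lipschitz constant `Lip(f,x)`. -/
def pLip {X Y : Type*} [PseudoMetricSpace X] [PseudoMetricSpace Y] (f : X → Y) (x : X) : ℝ :=
  limsup (fun y => dist (f y) (f x) / dist y x) (𝓝[≠] x)

end

section Aux

lemma euclDot_eq_inner {n : ℕ} (a b : EuclideanSpace ℝ (Fin n)) :
    euclDot a b = inner ℝ a b := by
  rw [PiLp.inner_apply]
  simp [euclDot, mul_comm]

lemma div_mono_num {a b d : ℝ} (h : a ≤ b) (hd : 0 ≤ d) : a / d ≤ b / d := by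
  rw [div_eq_mul_inv, div_eq_mul_inv]
  exact mul_le_mul_of_nonneg_right h (inv_nonneg.2 hd)

end Aux

/-- **A necessary condition for differentiability.**  Let `(U,φ)` be an `n`-dimensional chart
in a metric space `(X,d)` with `φ` `K`-Lipschitz, `x₀ ∈ U`, `λ > 0` and `xₘ → x₀` a sequence
such that `liminf_m max_{0≤i<n} |(φ(x_{mn+i})-φ(x₀))·v| / d(x_{mn+i},x₀) ≥ λ` for every unit
vector `v`.  If `f : X → ℝ` is differentiable at `x₀` with respect to `(U,φ)` with derivative
`D`, then `‖D‖ ≤ Lip(f,x₀)/λ` and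
`(λ / K) · Lip(f,x₀) ≤ liminf_m max_{0≤i<n} |f(x_{mn+i})-f(x₀)| / d(x_{mn+i},x₀)`. -/
theorem nondifferentiability_condition
    {X : Type*} [MetricSpace X] {n : ℕ} (U : Set X)
    (φ : X → EuclideanSpace ℝ (Fin n)) (K : ℝ≥0) (hφ : LipschitzWith K φ)
    (x₀ : X) (hx₀ : x₀ ∈ U) (lam : ℝ) (hlam : 0 < lam)
    (x : ℕ → X) (hconv : Tendsto x atTop (𝓝 x₀))
    (hsep : ∀ v : EuclideanSpace ℝ (Fin n), ‖v‖ = 1 →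
      lam ≤ liminf (fun m => ⨆ i : Fin n,
        |euclDot (φ (x (m * n + (i : ℕ))) - φ x₀) v| / dist (x (m * n + (i : ℕ))) x₀) atTop)
    (f : X → ℝ) (D : EuclideanSpace ℝ (Fin n))
    (hdiff : ∃! D', DiffAt f φ x₀ D') (hD : DiffAt f φ x₀ D) :
    ‖D‖ ≤ pLip f x₀ / lam ∧
    (lam / (K : ℝ)) * pLip f x₀ ≤ liminf (fun m => ⨆ i : Fin n,
      |f (x (m * n + (i : ℕ))) - f x₀| / dist (x (m * n + (i : ℕ))) x₀) atTop := by
  classical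
  have hgdef : pLip f x₀ = limsup (fun y => |f y - f x₀| / dist y x₀) (𝓝[≠] x₀) := by
    simp only [pLip, Real.dist_eq]
  have hDt : Tendsto (fun y => |f y - f x₀ - euclDot D (φ y - φ x₀)| / dist y x₀)
      (𝓝[≠] x₀) (𝓝 0) := hD
  have hgnn : ∀ y : X, 0 ≤ |f y - f x₀| / dist y x₀ :=
    fun y => div_nonneg (abs_nonneg _) dist_nonneg
  rcases Nat.eq_zero_or_pos n with hn | hn
  · -- degenerate case n = 0
    subst hn
    have hD0 : D = 0 := by ext i; exact i.elim0
    have hdot : ∀ w : EuclideanSpace ℝ (Fin 0), euclDot D w = 0 := by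
      intro w; simp [euclDot]
    have hL : liminf (fun m => ⨆ i : Fin 0,
        |f (x (m * 0 + (i : ℕ))) - f x₀| / dist (x (m * 0 + (i : ℕ))) x₀) atTop = 0 := by
      have : (fun m : ℕ => ⨆ i : Fin 0,
          |f (x (m * 0 + (i : ℕ))) - f x₀| / dist (x (m * 0 + (i : ℕ))) x₀) = fun _ => (0:ℝ) := by
        funext m; exact Real.iSup_of_isEmpty _
      rw [this, liminf_const]
    have hpl : pLip f x₀ = 0 := by
      rcases (𝓝[≠] x₀).eq_or_neBot with hbot | hnb
      · rw [hgdef, hbot, limsup_eq]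
        have h : {a : ℝ | ∀ᶠ y in (⊥ : Filter X), |f y - f x₀| / dist y x₀ ≤ a} = Set.univ := by
          ext a; simp
        rw [h]
        apply Real.sInf_of_not_bddBelow
        rintro ⟨b, hb⟩
        have := hb (Set.mem_univ (b - 1))
        linarith
      · have ht : Tendsto (fun y => |f y - f x₀| / dist y x₀) (𝓝[≠] x₀) (𝓝 0) := by
          have := hDt
          simp only [hdot, sub_zero] at this
          exact this
        rw [hgdef]
        exact ht.limsup_eq
    constructor
    · rw [hD0, norm_zero, hpl]
      simp
    · rw [hpl, hL, mul_zero]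
  -- main case n > 0
  haveI : Nonempty (Fin n) := ⟨⟨0, hn⟩⟩
  rcases (𝓝[≠] x₀).eq_or_neBot with hbot | hnb
  · -- isolated point: contradiction with uniqueness
    exfalso
    have hall : ∀ D' : EuclideanSpace ℝ (Fin n), DiffAt f φ x₀ D' := by
      intro D'
      unfold DiffAt
      rw [hbot]
      exact tendsto_bot
    obtain ⟨D₀, -, huniq⟩ := hdiff
    have h1 := huniq 0 (hall 0)
    have h2 := huniq (EuclideanSpace.single ⟨0, hn⟩ (1:ℝ)) (hall _)
    have h3 : EuclideanSpace.single (⟨0, hn⟩ : Fin n) (1:ℝ) = 0 := h2.trans h1.symm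
    have h4 := congrArg norm h3
    rw [EuclideanSpace.norm_single, norm_zero] at h4
    norm_num at h4
  haveI := hnb
  -- basic pointwise estimates
  have hq : ∀ y, |euclDot D (φ y - φ x₀)| ≤ ‖D‖ * ((K:ℝ) * dist y x₀) := by
    intro y
    rw [euclDot_eq_inner]
    refine (abs_real_inner_le_norm _ _).trans ?_
    refine mul_le_mul_of_nonneg_left ?_ (norm_nonneg _)
    rw [← dist_eq_norm]
    exact hφ.dist_le_mul y x₀
  have hqd : ∀ y, y ≠ x₀ → |euclDot D (φ y - φ x₀)| / dist y x₀ ≤ ‖D‖ * (K:ℝ) := by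
    intro y hy
    have hd : 0 < dist y x₀ := dist_pos.2 hy
    rw [div_le_iff₀ hd]
    calc |euclDot D (φ y - φ x₀)| ≤ ‖D‖ * ((K:ℝ) * dist y x₀) := hq y
      _ = ‖D‖ * (K:ℝ) * dist y x₀ := by ring
  have hge : ∀ y, |f y - f x₀| / dist y x₀ ≤
      |euclDot D (φ y - φ x₀)| / dist y x₀ +
      |f y - f x₀ - euclDot D (φ y - φ x₀)| / dist y x₀ := by
    intro y
    rw [← add_div]
    apply div_mono_num ?_ dist_nonneg
    calc |f y - f x₀| = |euclDot D (φ y - φ x₀) + (f y - f x₀ - euclDot D (φ y - φ x₀))| := by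
          ring_nf
      _ ≤ |euclDot D (φ y - φ x₀)| + |f y - f x₀ - euclDot D (φ y - φ x₀)| := abs_add_le _ _
  have heg : ∀ y, |euclDot D (φ y - φ x₀)| / dist y x₀ ≤
      |f y - f x₀| / dist y x₀ +
      |f y - f x₀ - euclDot D (φ y - φ x₀)| / dist y x₀ := by
    intro y
    rw [← add_div]
    apply div_mono_num ?_ dist_nonneg
    calc |euclDot D (φ y - φ x₀)| =
          |(f y - f x₀) - (f y - f x₀ - euclDot D (φ y - φ x₀))| := by ring_nf
      _ ≤ |f y - f x₀| + |f y - f x₀ - euclDot D (φ y - φ x₀)| := abs_sub _ _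
  -- smallness of the error term near x₀
  have hsmall : ∀ ε > (0:ℝ), ∃ r > (0:ℝ), ∀ y, dist y x₀ < r → y ≠ x₀ →
      |f y - f x₀ - euclDot D (φ y - φ x₀)| / dist y x₀ < ε := by
    intro ε hε
    have hev : ∀ᶠ y in 𝓝[≠] x₀,
        |f y - f x₀ - euclDot D (φ y - φ x₀)| / dist y x₀ < ε := hDt.eventually_lt_const hε
    obtain ⟨r, hr, hsub⟩ := Metric.mem_nhdsWithin_iff.1 hev
    exact ⟨r, hr, fun y hy hne => hsub ⟨Metric.mem_ball.2 hy, hne⟩⟩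
  have hne : ∀ᶠ y in 𝓝[≠] x₀, y ≠ x₀ := eventually_mem_nhdsWithin
  -- bound on the difference quotients
  have hBoundg : IsBoundedUnder (· ≤ ·) (𝓝[≠] x₀) (fun y => |f y - f x₀| / dist y x₀) := by
    refine ⟨‖D‖ * (K:ℝ) + 1, eventually_map.2 ?_⟩
    filter_upwards [hne, hDt.eventually_lt_const one_pos] with y hy he
    exact (hge y).trans (add_le_add (hqd y hy) he.le)
  have hplip_nonneg : 0 ≤ pLip f x₀ := by
    rw [hgdef]
    exact le_limsup_of_frequently_le ((Eventually.of_forall hgnn).frequently) hBoundg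
  have hpLip_le : pLip f x₀ ≤ ‖D‖ * (K:ℝ) := by
    rw [hgdef]
    apply le_of_forall_sub_le
    intro ε hε
    rw [sub_le_iff_le_add]
    apply limsup_le_of_le (isCoboundedUnder_le_of_le _ fun y => hgnn y)
    filter_upwards [hne, hDt.eventually_lt_const hε] with y hy he
    exact (hge y).trans (add_le_add (hqd y hy) he.le)
  -- sequence facts
  have hki : ∀ i : Fin n, Tendsto (fun m => x (m * n + (i:ℕ))) atTop (𝓝 x₀) := by
    intro i
    apply hconv.comp
    apply tendsto_atTop_mono (fun m => ?_) tendsto_id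
    calc m = m * 1 := (mul_one m).symm
      _ ≤ m * n := Nat.mul_le_mul_left m hn
      _ ≤ m * n + (i:ℕ) := Nat.le_add_right _ _
  have hclose : ∀ r > (0:ℝ), ∀ᶠ m in atTop, ∀ i : Fin n,
      dist (x (m * n + (i:ℕ))) x₀ < r := by
    intro r hr
    rw [eventually_all]
    intro i
    exact Metric.tendsto_nhds.1 (hki i) r hr
  have hLfBound : ∀ᶠ m in atTop, (⨆ i : Fin n,
      |f (x (m * n + (i : ℕ))) - f x₀| / dist (x (m * n + (i : ℕ))) x₀) ≤ ‖D‖ * (K:ℝ) + 1 := by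
    obtain ⟨r, hr, hrP⟩ := hsmall 1 one_pos
    filter_upwards [hclose r hr] with m hm
    apply ciSup_le
    intro i
    by_cases hxy : x (m * n + (i:ℕ)) = x₀
    · rw [hxy]
      simp only [sub_self, abs_zero, dist_self, div_zero]
      positivity
    · exact (hge _).trans (add_le_add (hqd _ hxy) (hrP _ (hm i) hxy).le)
  have hcob : IsCoboundedUnder (· ≥ ·) atTop (fun m => ⨆ i : Fin n,
      |f (x (m * n + (i : ℕ))) - f x₀| / dist (x (m * n + (i : ℕ))) x₀) :=
    IsBoundedUnder.isCoboundedUnder_ge ⟨‖D‖ * (K:ℝ) + 1, eventually_map.2 hLfBound⟩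
  -- K is positive
  have hKpos : (0:ℝ) < (K:ℝ) := by
    by_contra hK
    push_neg at hK
    have hK0 : ∀ y, φ y = φ x₀ := by
      intro y
      have h1 := hφ.dist_le_mul y x₀
      have h2 : dist (φ y) (φ x₀) ≤ 0 :=
        h1.trans (mul_nonpos_of_nonpos_of_nonneg hK dist_nonneg)
      exact dist_le_zero.1 h2
    have hb0 := hsep (EuclideanSpace.single ⟨0, hn⟩ (1:ℝ))
      (by rw [EuclideanSpace.norm_single]; norm_num)
    have hz : (fun m : ℕ => ⨆ i : Fin n,
        |euclDot (φ (x (m * n + (i : ℕ))) - φ x₀) (EuclideanSpace.single ⟨0, hn⟩ (1:ℝ))| /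
          dist (x (m * n + (i : ℕ))) x₀) = fun _ => (0:ℝ) := by
      funext m
      have : ∀ i : Fin n,
          |euclDot (φ (x (m * n + (i : ℕ))) - φ x₀) (EuclideanSpace.single ⟨0, hn⟩ (1:ℝ))| /
            dist (x (m * n + (i : ℕ))) x₀ = 0 := by
        intro i
        rw [hK0, sub_self]
        simp [euclDot]
      simp only [this, ciSup_const]
    rw [hz, liminf_const] at hb0
    linarith
  -- split on D = 0
  by_cases hD0 : D = 0
  · constructor
    · rw [hD0, norm_zero]
      exact div_nonneg hplip_nonneg hlam.le
    · have h1 : pLip f x₀ = 0 := by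
        have := hpLip_le
        rw [hD0, norm_zero, zero_mul] at this
        linarith
      rw [h1, mul_zero]
      apply le_liminf_of_le hcob
      apply Eventually.of_forall
      intro m
      exact Real.iSup_nonneg fun i => hgnn _
  -- D ≠ 0 : the quantitative claim
  have hnD : 0 < ‖D‖ := norm_pos_iff.2 hD0
  set v : EuclideanSpace ℝ (Fin n) := ‖D‖⁻¹ • D with hvdef
  have hv : ‖v‖ = 1 := by
    rw [hvdef, norm_smul, norm_inv, norm_norm, inv_mul_cancel₀ hnD.ne']
  have hvdot : ∀ w, ‖D‖ * |euclDot w v| = |euclDot D w| := by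
    intro w
    rw [hvdef, euclDot_eq_inner, euclDot_eq_inner, real_inner_smul_right, abs_mul, abs_inv,
      abs_norm, real_inner_comm, ← mul_assoc, mul_inv_cancel₀ hnD.ne', one_mul]
  have hbv := hsep v hv
  have hbnn : ∀ m : ℕ, 0 ≤ ⨆ i : Fin n,
      |euclDot (φ (x (m * n + (i : ℕ))) - φ x₀) v| / dist (x (m * n + (i : ℕ))) x₀ :=
    fun m => Real.iSup_nonneg fun i => div_nonneg (abs_nonneg _) dist_nonneg
  have CLAIM : ∀ ε > (0:ℝ), ∀ r > (0:ℝ), ∀ᶠ m in atTop, ∃ i : Fin n,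
      x (m * n + (i:ℕ)) ≠ x₀ ∧ dist (x (m * n + (i:ℕ))) x₀ < r ∧
      lam * ‖D‖ - ε ≤ |f (x (m * n + (i : ℕ))) - f x₀| / dist (x (m * n + (i : ℕ))) x₀ := by
    intro ε hε r hr
    set δ : ℝ := min (lam / 2) (ε / (2 * (‖D‖ + 1))) with hδdef
    have hδpos : 0 < δ := lt_min (by linarith) (by positivity)
    have hδlam : δ ≤ lam / 2 := min_le_left _ _
    have hδε : ‖D‖ * δ ≤ ε / 2 := by
      have h1 : ‖D‖ / (‖D‖ + 1) ≤ 1 := by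
        rw [div_le_one (by positivity)]
        linarith
      calc ‖D‖ * δ ≤ ‖D‖ * (ε / (2 * (‖D‖ + 1))) :=
            mul_le_mul_of_nonneg_left (min_le_right _ _) (norm_nonneg _)
        _ = (‖D‖ / (‖D‖ + 1)) * (ε / 2) := by
            field_simp
        _ ≤ 1 * (ε / 2) := mul_le_mul_of_nonneg_right h1 (by positivity)
        _ = ε / 2 := one_mul _
    obtain ⟨r', hr', hrP⟩ := hsmall (ε / 2) (by positivity)
    have hE1 : ∀ᶠ m in atTop, lam - δ < ⨆ i : Fin n,
        |euclDot (φ (x (m * n + (i : ℕ))) - φ x₀) v| / dist (x (m * n + (i : ℕ))) x₀ :=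
      eventually_lt_of_lt_liminf (lt_of_lt_of_le (by linarith) hbv)
        ⟨0, eventually_map.2 (Eventually.of_forall hbnn)⟩
    filter_upwards [hE1, hclose r hr, hclose r' hr'] with m hm hmr hmr'
    obtain ⟨i, hi⟩ := exists_lt_of_lt_ciSup hm
    have hxne : x (m * n + (i:ℕ)) ≠ x₀ := by
      intro h
      rw [h] at hi
      simp only [sub_self, dist_self, div_zero] at hi
      linarith
    refine ⟨i, hxne, hmr i, ?_⟩
    have hq' : ‖D‖ * (lam - δ) ≤
        |euclDot D (φ (x (m * n + (i:ℕ))) - φ x₀)| / dist (x (m * n + (i:ℕ))) x₀ := by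
      rw [← hvdot, mul_div_assoc]
      exact mul_le_mul_of_nonneg_left hi.le (norm_nonneg _)
    have he' : |f (x (m * n + (i:ℕ))) - f x₀ -
        euclDot D (φ (x (m * n + (i:ℕ))) - φ x₀)| / dist (x (m * n + (i:ℕ))) x₀ < ε / 2 :=
      hrP _ (hmr' i) hxne
    have hcmp := heg (x (m * n + (i:ℕ)))
    have hexp : ‖D‖ * (lam - δ) = ‖D‖ * lam - ‖D‖ * δ := mul_sub _ _ _
    have hcomm : ‖D‖ * lam = lam * ‖D‖ := mul_comm _ _
    linarith
  have KEY1 : lam * ‖D‖ ≤ pLip f x₀ := by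
    rw [hgdef]
    apply le_of_forall_sub_le
    intro ε hε
    apply le_limsup_of_frequently_le ?_ hBoundg
    rw [frequently_iff]
    intro V hV
    obtain ⟨r, hr, hsub⟩ := Metric.mem_nhdsWithin_iff.1 hV
    obtain ⟨m, i, hxne, hdist, hgi⟩ := (CLAIM ε hε r hr).exists
    exact ⟨x (m * n + (i:ℕ)), hsub ⟨Metric.mem_ball.2 hdist, hxne⟩, hgi⟩
  have KEY2 : lam * ‖D‖ ≤ liminf (fun m => ⨆ i : Fin n,
      |f (x (m * n + (i : ℕ))) - f x₀| / dist (x (m * n + (i : ℕ))) x₀) atTop := by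
    apply le_of_forall_sub_le
    intro ε hε
    apply le_liminf_of_le hcob
    filter_upwards [CLAIM ε hε 1 one_pos] with m hm
    obtain ⟨i, hxne, -, hgi⟩ := hm
    exact hgi.trans (le_ciSup (f := fun j : Fin n =>
      |f (x (m * n + (j:ℕ))) - f x₀| / dist (x (m * n + (j:ℕ))) x₀)
      (Set.finite_range _).bddAbove i)
  constructor
  · rw [le_div_iff₀ hlam, mul_comm]
    exact KEY1
  · calc (lam / (K:ℝ)) * pLip f x₀ ≤ (lam / (K:ℝ)) * (‖D‖ * (K:ℝ)) :=
        mul_le_mul_of_nonneg_left hpLip_le (by positivity)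
    _ = lam * ‖D‖ := by
        field_simp
    _ ≤ _ := KEY2
end

section
/- Let (X,d,μ) be a metric measure space and for each k ∈ ℕ let A_k ⊂ X be measurable such that μ restricted to A_k has an Alberti representation. Then μ restricted to ⋃_k A_k has an Alberti representation. -/
open MeasureTheory Metric Filter Set Topology
open scoped ENNReal NNReal

noncomputable section

/-- The pointwise Lipschitz constant of `f` at `x` computed within the set `s`. -/
def pLipOn {X Y : Type*} [PseudoMetricSpace X] [PseudoMetricSpace Y] (f : X → Y)
    (s : Set X) (x : X) : ℝ :=
  limsup (fun y => dist (f y) (f x) / dist y x) (𝓝[s \ {x}] x)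

/-- A Lipschitz curve in `X`: a bi-Lipschitz map from a nonempty compact subset of `ℝ` to `X`. -/
structure Curve (X : Type*) [MetricSpace X] where
  dom : Set ℝ
  toFun : ℝ → X
  dom_nonempty : dom.Nonempty
  dom_compact : IsCompact dom
  biLip : ∃ L : ℝ≥0, 0 < L ∧ LipschitzOnWith L toFun dom ∧
    ∀ s ∈ dom, ∀ t ∈ dom, dist s t ≤ L * dist (toFun s) (toFun t)

/-- The graph of a curve, as a nonempty compact subset of `ℝ × X`. -/
def Curve.graph {X : Type*} [MetricSpace X] (γ : Curve X) :
    TopologicalSpace.NonemptyCompacts (ℝ × X) :=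
  ⟨⟨(fun t => (t, γ.toFun t)) '' γ.dom,
      γ.dom_compact.image_of_continuousOn
        (continuousOn_id.prodMk γ.biLip.choose_spec.2.1.continuousOn)⟩,
    γ.dom_nonempty.image _⟩

/-- The space of curves `Γ(X)` is metrized by the Hausdorff distance between graphs; we equip it
with the corresponding Borel σ-algebra. -/
instance {X : Type*} [MetricSpace X] : MeasurableSpace (Curve X) :=
  MeasurableSpace.comap Curve.graph (borel _)

/-- The image of a curve. -/
def Curve.im {X : Type*} [MetricSpace X] (γ : Curve X) : Set X := γ.toFun '' γ.dom

/-- `γ` has derivative `v` at `t ∈ Dom γ` with respect to `g`, in the sense that any (some)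
Lipschitz extension of `g ∘ γ` to `ℝ` has derivative `v` at `t`. -/
def HasCurveDerivAt {X V : Type*} [MetricSpace X] [NormedAddCommGroup V] [NormedSpace ℝ V]
    (γ : Curve X) (g : X → V) (t : ℝ) (v : V) : Prop :=
  t ∈ γ.dom ∧ ∃ F : ℝ → V, (∃ K : ℝ≥0, LipschitzWith K F) ∧
    EqOn F (fun s => g (γ.toFun s)) γ.dom ∧ HasDerivAt F v t

/-- An Alberti representation of `μ ⌞ A`. -/
structure AlbertiRep {X : Type*} [MetricSpace X] [MeasurableSpace X] [BorelSpace X]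
    (μ : Measure X) (A : Set X) where
  P : Measure (Curve X)
  P_prob : IsProbabilityMeasure P
  ν : Curve X → Measure X
  ν_ac : ∀ γ : Curve X, ν γ ≪ (μH[1] : Measure X).restrict γ.im
  ν_meas : ∀ Y : Set X, MeasurableSet Y → Y ⊆ A → Measurable fun γ : Curve X => ν γ Y
  rep : ∀ Y : Set X, MeasurableSet Y → Y ⊆ A → μ Y = ∫⁻ γ, ν γ Y ∂P

/-- The cone `C(w,θ)` of width `θ` centred on `w`. -/
def cone {n : ℕ} (w : EuclideanSpace ℝ (Fin n)) (θ : ℝ) : Set (EuclideanSpace ℝ (Fin n)) :=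
  {v | (1 - θ) * ‖v‖ ≤ euclDot v w}

/-- A curve is in the `φ`-direction of a cone `C` if `(φ∘γ)'(t) ∈ C ∖ {0}` for almost every
`t ∈ Dom γ`. -/
def Curve.InDirection {X : Type*} [MetricSpace X] {n : ℕ} (γ : Curve X)
    (φ : X → EuclideanSpace ℝ (Fin n)) (C : Set (EuclideanSpace ℝ (Fin n))) : Prop :=
  ∀ᵐ t ∂(volume.restrict γ.dom), ∃ v, v ∈ C ∧ v ≠ 0 ∧ HasCurveDerivAt γ φ t v

/-- An Alberti representation is in the `φ`-direction of `C` if almost every curve is. -/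
def AlbertiRep.InDirection {X : Type*} [MetricSpace X] [MeasurableSpace X] [BorelSpace X]
    {μ : Measure X} {A : Set X} {n : ℕ} (Al : AlbertiRep μ A)
    (φ : X → EuclideanSpace ℝ (Fin n)) (C : Set (EuclideanSpace ℝ (Fin n))) : Prop :=
  ∀ᵐ γ ∂Al.P, γ.InDirection φ C

/-- A family of cones is independent if any choice of nonzero vectors, one from each cone,
is linearly independent. -/
def IndepCones {n m : ℕ} (C : Fin m → Set (EuclideanSpace ℝ (Fin n))) : Prop :=
  ∀ v : Fin m → EuclideanSpace ℝ (Fin n), (∀ i, v i ∈ C i ∧ v i ≠ 0) → LinearIndependent ℝ v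

/-- A family of Alberti representations is `φ`-independent if there are independent cones
`C(wᵢ,θᵢ)` such that each representation is in the `φ`-direction of its cone. -/
def PhiIndep {X : Type*} [MetricSpace X] [MeasurableSpace X] [BorelSpace X]
    {μ : Measure X} {A : Set X} {n m : ℕ} (φ : X → EuclideanSpace ℝ (Fin n))
    (As : Fin m → AlbertiRep μ A) : Prop :=
  ∃ (w : Fin m → EuclideanSpace ℝ (Fin n)) (θ : Fin m → ℝ),
    (∀ i, ‖w i‖ = 1 ∧ 0 < θ i ∧ θ i < 1) ∧
    IndepCones (fun i => cone (w i) (θ i)) ∧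
    ∀ i, (As i).InDirection φ (cone (w i) (θ i))

end

/-- **Combining Alberti representations.**  Let `(X,d,μ)` be a metric measure space (a complete
separable metric space with a finite Borel measure whose set of isolated points is null) and for
each `k ∈ ℕ` let `A k ⊆ X` be measurable such that `μ ⌞ A k` has an Alberti representation.
Then `μ ⌞ ⋃ k, A k` has an Alberti representation. -/
theorem alberti_rep_of_iUnion
    {X : Type*} [MetricSpace X] [CompleteSpace X] [TopologicalSpace.SeparableSpace X]
    [MeasurableSpace X] [BorelSpace X] (μ : Measure X) [IsFiniteMeasure μ]
    (hiso : μ {x : X | 𝓝[≠] x = ⊥} = 0)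
    (A : ℕ → Set X) (hA : ∀ k, MeasurableSet (A k))
    (hrep : ∀ k, Nonempty (AlbertiRep μ (A k))) :
    Nonempty (AlbertiRep μ (⋃ k, A k)) := by

  classical
  set R : ∀ k, AlbertiRep μ (A k) := fun k => (hrep k).some with hR
  set B : ℕ → Set X := disjointed A with hB
  have hBmeas : ∀ k, MeasurableSet (B k) := MeasurableSet.disjointed hA
  have hBsub : ∀ k, B k ⊆ A k := fun k => disjointed_subset A k
  have hBdisj : Pairwise (Function.onFun Disjoint B) := disjoint_disjointed A
  have hBU : (⋃ k, B k) = ⋃ k, A k := iUnion_disjointed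
  set c : ℕ → ℝ≥0∞ := fun k => 2⁻¹ ^ (k + 1) with hc
  have hc_ne : ∀ k, c k ≠ 0 := by
    intro k
    simp [hc, pow_ne_zero]
  have hc_sum : (∑' k, c k) = 1 := by
    have h1 : (∑' k : ℕ, (2⁻¹ : ℝ≥0∞) ^ k) = 2 := by
      rw [ENNReal.tsum_geometric]
      rw [show (1 : ℝ≥0∞) - 2⁻¹ = 2⁻¹ by
        rw [ENNReal.sub_eq_of_eq_add (by simp)]
        rw [ENNReal.inv_two_add_inv_two]]
      simp
    calc (∑' k, c k) = ∑' k : ℕ, 2⁻¹ * (2⁻¹ : ℝ≥0∞) ^ k := by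
          simp [hc, pow_succ, mul_comm]
      _ = 2⁻¹ * ∑' k : ℕ, (2⁻¹ : ℝ≥0∞) ^ k := ENNReal.tsum_mul_left
      _ = 1 := by rw [h1]; simp [ENNReal.inv_mul_cancel]
  set P : Measure (Curve X) := Measure.sum (fun k => c k • (R k).P) with hP
  have hPprob : IsProbabilityMeasure P := by
    constructor
    rw [hP, Measure.sum_apply _ MeasurableSet.univ]
    have : ∀ k, (c k • (R k).P) univ = c k := by
      intro k
      have := (R k).P_prob
      simp [this.measure_univ]
    simp only [this, hc_sum]
  haveI := hPprob
  have hPk_ac : ∀ k, (R k).P ≪ P := by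
    intro k
    intro s hs
    have hle : (c k • (R k).P) s ≤ P s := Measure.le_sum (fun k => c k • (R k).P) k s
    rw [hs] at hle
    have : c k * (R k).P s = 0 := le_antisymm (by simpa using hle) zero_le
    exact (mul_eq_zero.1 this).resolve_left (hc_ne k)
  set f : ℕ → Curve X → ℝ≥0∞ := fun k => ((R k).P).rnDeriv P with hf
  have hfmeas : ∀ k, Measurable (f k) := fun k => Measure.measurable_rnDeriv _ _
  set ν : Curve X → Measure X :=
    fun γ => Measure.sum (fun k => f k γ • (((R k).ν γ).restrict (B k))) with hν
  have hνapp : ∀ (γ : Curve X) (Y : Set X), MeasurableSet Y →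
      ν γ Y = ∑' k, f k γ * (R k).ν γ (Y ∩ B k) := by
    intro γ Y hY
    rw [hν]
    rw [Measure.sum_apply _ hY]
    congr 1
    funext k
    rw [Measure.smul_apply, Measure.restrict_apply hY]
    rfl
  refine ⟨⟨P, hPprob, ν, ?_, ?_, ?_⟩⟩
  · -- absolute continuity
    intro γ
    refine Measure.AbsolutelyContinuous.mk ?_
    intro s hs h0
    rw [hνapp γ s hs]
    have : ∀ k, f k γ * (R k).ν γ (s ∩ B k) = 0 := by
      intro k
      have h1 : ((μH[1] : Measure X).restrict γ.im) (s ∩ B k) = 0 :=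
        measure_mono_null (inter_subset_left) h0
      have h2 : (R k).ν γ (s ∩ B k) = 0 := (R k).ν_ac γ h1
      rw [h2, mul_zero]
    simp [this]
  · -- measurability
    intro Y hY hYsub
    have : (fun γ : Curve X => ν γ Y) =
        fun γ => ∑' k, f k γ * (R k).ν γ (Y ∩ B k) := by
      funext γ; exact hνapp γ Y hY
    rw [this]
    refine Measurable.ennreal_tsum ?_
    intro k
    exact (hfmeas k).mul ((R k).ν_meas (Y ∩ B k) (hY.inter (hBmeas k))
      ((inter_subset_right).trans (hBsub k)))
  · -- representation
    intro Y hY hYsub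
    have hYcup : Y = ⋃ k, Y ∩ B k := by
      rw [← inter_iUnion, hBU]
      exact (inter_eq_left.2 hYsub).symm
    have hmuY : μ Y = ∑' k, μ (Y ∩ B k) := by
      conv_lhs => rw [hYcup]
      exact measure_iUnion
        (fun i j hij => ((hBdisj hij).inf_left' Y).inf_right' Y)
        (fun k => hY.inter (hBmeas k))
    have hterm : ∀ k, μ (Y ∩ B k) = ∫⁻ γ, f k γ * (R k).ν γ (Y ∩ B k) ∂P := by
      intro k
      haveI := (R k).P_prob
      have hmk : Measurable fun γ => (R k).ν γ (Y ∩ B k) :=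
        (R k).ν_meas (Y ∩ B k) (hY.inter (hBmeas k))
          ((inter_subset_right).trans (hBsub k))
      have h1 : μ (Y ∩ B k) = ∫⁻ γ, (R k).ν γ (Y ∩ B k) ∂((R k).P) :=
        (R k).rep (Y ∩ B k) (hY.inter (hBmeas k))
          ((inter_subset_right).trans (hBsub k))
      rw [h1]
      exact (lintegral_rnDeriv_mul (hPk_ac k) hmk.aemeasurable).symm
    have hrhs : (∫⁻ γ, ν γ Y ∂P) = ∑' k, ∫⁻ γ, f k γ * (R k).ν γ (Y ∩ B k) ∂P := by
      have : (fun γ : Curve X => ν γ Y) =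
          fun γ => ∑' k, f k γ * (R k).ν γ (Y ∩ B k) := by
        funext γ; exact hνapp γ Y hY
      rw [this]
      refine lintegral_tsum ?_
      intro k
      exact ((hfmeas k).mul ((R k).ν_meas (Y ∩ B k) (hY.inter (hBmeas k))
        ((inter_subset_right).trans (hBsub k)))).aemeasurable
    rw [hmuY, hrhs]
    exact tsum_congr hterm
end
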